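/- arXiv:2012.09362 — 2 statements merged into one kernel-verified Lean document; each statement's English description precedes it below -/
import Mathlib

section
/- L¹-contraction for the coupled stationary system: under the same hypotheses as the order-preservation estimate, |a(u) - a(ū)| + |b(v) - b(v̄)| ≤ |f - f̄| + |b(g) - b(ḡ)|. -/
/-- The constraint graph C(p,q;·) of the interval [p,q]: ξ ∈ C(p,q;r). -/
def cMem (p q r ξ : ℝ) : Prop :=
  (r = p ∧ ξ ≤ 0) ∨ (p < r ∧ r < q ∧ ξ = 0) ∨ (r = q ∧ 0 ≤ ξ)

lemma cMem_nonpos {p q r ξ : ℝ} (h : cMem p q r ξ) (hr : r < q) : ξ ≤ 0 := by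
  rcases h with ⟨_, h⟩ | ⟨_, _, h⟩ | ⟨h, _⟩ <;> simp_all

lemma cMem_nonneg {p q r ξ : ℝ} (h : cMem p q r ξ) (hr : p < r) : 0 ≤ ξ := by
  rcases h with ⟨h, _⟩ | ⟨_, _, h⟩ | ⟨_, h⟩ <;> simp_all

lemma cMem_mem {p q r ξ : ℝ} (h : cMem p q r ξ) (hpq : p ≤ q) : p ≤ r ∧ r ≤ q := by
  rcases h with ⟨h, _⟩ | ⟨h1, h2, _⟩ | ⟨h, _⟩ <;> constructor <;> subst_vars <;> first | rfl | linarith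

lemma main_ineq (A B Ξ : ℝ) (h1 : 0 < Ξ → A ≤ 0 ∨ 0 ≤ B) (h2 : Ξ < 0 → 0 ≤ A ∨ B ≤ 0) :
    |A| + |B| ≤ |A - Ξ| + |B + Ξ| := by
  rcases lt_trichotomy Ξ 0 with h | h | h
  · rcases h2 h with h' | h' <;>
    rcases abs_cases A with ⟨e1, s1⟩ | ⟨e1, s1⟩ <;> rcases abs_cases B with ⟨e2, s2⟩ | ⟨e2, s2⟩ <;>
    rcases abs_cases (A - Ξ) with ⟨e3, s3⟩ | ⟨e3, s3⟩ <;>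
    rcases abs_cases (B + Ξ) with ⟨e4, s4⟩ | ⟨e4, s4⟩ <;> linarith
  · simp [h]
  · rcases h1 h with h' | h' <;>
    rcases abs_cases A with ⟨e1, s1⟩ | ⟨e1, s1⟩ <;> rcases abs_cases B with ⟨e2, s2⟩ | ⟨e2, s2⟩ <;>
    rcases abs_cases (A - Ξ) with ⟨e3, s3⟩ | ⟨e3, s3⟩ <;>
    rcases abs_cases (B + Ξ) with ⟨e4, s4⟩ | ⟨e4, s4⟩ <;> linarith

/-- L¹-contraction estimate for the coupled stationary system. -/
theorem coupled_system_L1_contraction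
    (a b γl γr : ℝ → ℝ)
    (hac : Continuous a) (ham : StrictMono a)
    (hbc : Continuous b) (hbm : Monotone b) (L : NNReal) (hbL : LipschitzWith L b)
    (hγlc : Continuous γl) (hγrc : Continuous γr)
    (hγlm : Monotone γl) (hγrm : Monotone γr) (hrl : ∀ x, γr x ≤ γl x)
    (u v ξ f g ub vb ξb fb gb : ℝ)
    (e1 : a u - ξ = f) (e2 : b v + ξ = b g) (hc : cMem (γr u) (γl u) v ξ)
    (e1b : a ub - ξb = fb) (e2b : b vb + ξb = b gb) (hcb : cMem (γr ub) (γl ub) vb ξb) :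
    |a u - a ub| + |b v - b vb| ≤ |f - fb| + |b g - b gb| := by
  obtain ⟨hm1, hm2⟩ := cMem_mem hc (hrl u)
  obtain ⟨hm1b, hm2b⟩ := cMem_mem hcb (hrl ub)
  have key : ∀ Ξ : ℝ, Ξ = ξ - ξb →
      |a u - a ub| + |b v - b vb| ≤ |(a u - a ub) - Ξ| + |(b v - b vb) + Ξ| := by
    intro Ξ hΞ
    apply main_ineq
    · intro hpos
      by_contra hcon
      push_neg at hcon
      obtain ⟨hA, hB⟩ := hcon
      have hu : ub < u := ham.lt_iff_lt.mp (by linarith)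
      have hv : v < vb := by
        by_contra hv'
        push_neg at hv'
        exact absurd (hbm hv') (by linarith)
      have hξ : ξ ≤ 0 := cMem_nonpos hc (lt_of_lt_of_le hv (hm2b.trans (hγlm hu.le)))
      have hξb : 0 ≤ ξb := cMem_nonneg hcb (lt_of_le_of_lt ((hγrm hu.le).trans hm1) hv)
      linarith
    · intro hneg
      by_contra hcon
      push_neg at hcon
      obtain ⟨hA, hB⟩ := hcon
      have hu : u < ub := ham.lt_iff_lt.mp (by linarith)
      have hv : vb < v := by
        by_contra hv'
        push_neg at hv'
        exact absurd (hbm hv') (by linarith)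
      have hξ : 0 ≤ ξ := cMem_nonneg hc (lt_of_le_of_lt ((hγrm hu.le).trans hm1b) hv)
      have hξb : ξb ≤ 0 := cMem_nonpos hcb (lt_of_lt_of_le hv (hm2.trans (hγlm hu.le)))
      linarith
  have := key (ξ - ξb) rfl
  have hA : (a u - a ub) - (ξ - ξb) = f - fb := by linarith
  have hB : (b v - b vb) + (ξ - ξb) = b g - b gb := by linarith
  rw [hA, hB] at this
  exact this
end

section
/- K-component accretivity estimate: if (u, (v_k), (ξ_k)) satisfies a(u) - Σ_k ξ_k = f, b_k(v_k) + ξ_k = b_k(g_k), ξ_k ∈ C(γ_{r,k}(u), γ_{l,k}(u); v_k) for 1 ≤ k ≤ K, and similarly for barred quantities with data (f̄, (ḡ_k)), then |a(u) - a(ū)| + Σ_k |b_k(v_k) - b_k(v̄_k)| ≤ |f - f̄| + Σ_k |b_k(g_k) - b_k(ḡ_k)|. -/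
lemma cMem_bounds {p q r ξ : ℝ} (hpq : p ≤ q) (h : cMem p q r ξ) : p ≤ r ∧ r ≤ q := by
  rcases h with ⟨h1, _⟩ | ⟨h1, h2, _⟩ | ⟨h1, _⟩ <;> subst_vars <;>
    first | exact ⟨le_refl _, hpq⟩ | exact ⟨le_of_lt h1, le_of_lt h2⟩ | exact ⟨hpq, le_refl _⟩

lemma K_component_accretivity_aux
    (K : ℕ) (a : ℝ → ℝ) (ham : StrictMono a)
    (b γl γr : Fin K → ℝ → ℝ) (hbm : ∀ k, Monotone (b k))
    (hγlm : ∀ k, Monotone (γl k)) (hγrm : ∀ k, Monotone (γr k))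
    (hrl : ∀ k x, γr k x ≤ γl k x)
    (u f ub fb : ℝ) (v ξ g vb ξb gb : Fin K → ℝ)
    (huu : ub ≤ u)
    (e1 : a u - ∑ k, ξ k = f)
    (e2 : ∀ k, b k (v k) + ξ k = b k (g k))
    (hc : ∀ k, cMem (γr k u) (γl k u) (v k) (ξ k))
    (e1b : a ub - ∑ k, ξb k = fb)
    (e2b : ∀ k, b k (vb k) + ξb k = b k (gb k))
    (hcb : ∀ k, cMem (γr k ub) (γl k ub) (vb k) (ξb k)) :
    |a u - a ub| + ∑ k, |b k (v k) - b k (vb k)| ≤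
      |f - fb| + ∑ k, |b k (g k) - b k (gb k)| := by
  have haub : a ub ≤ a u := ham.monotone huu
  have key : ∀ k, (ξ k - ξb k) + |b k (v k) - b k (vb k)| ≤ |b k (g k) - b k (gb k)| := by
    intro k
    have hB : b k (v k) - b k (vb k) = (b k (g k) - b k (gb k)) - (ξ k - ξb k) := by
      have h1 := e2 k; have h2 := e2b k; linarith
    rcases le_or_gt (b k (vb k)) (b k (v k)) with h | h
    · rw [abs_of_nonneg (by linarith)]
      have : (ξ k - ξb k) + (b k (v k) - b k (vb k)) = b k (g k) - b k (gb k) := by linarith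
      rw [this]; exact le_abs_self _
    · have hv : v k < vb k := by
        by_contra hcon; push_neg at hcon
        exact absurd (hbm k hcon) (not_le.mpr h)
      have hu := cMem_bounds (hrl k u) (hc k)
      have hub := cMem_bounds (hrl k ub) (hcb k)
      have h1 : ξ k ≤ 0 := by
        by_contra hpos; push_neg at hpos
        have hv1 : v k = γl k u := by
          rcases hc k with ⟨_, h'⟩ | ⟨_, _, h'⟩ | ⟨h', _⟩ <;> first | linarith | exact h'
        have : γl k ub ≤ v k := hv1 ▸ hγlm k huu
        linarith [hub.2]
      have h2 : 0 ≤ ξb k := by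
        by_contra hneg; push_neg at hneg
        have hv2 : vb k = γr k ub := by
          rcases hcb k with ⟨h', _⟩ | ⟨_, _, h'⟩ | ⟨_, h'⟩ <;> first | exact h' | linarith
        have : vb k ≤ γr k u := hv2 ▸ hγrm k huu
        linarith [hu.1]
      rw [abs_of_neg (by linarith : b k (v k) - b k (vb k) < 0)]
      have : (ξ k - ξb k) + -(b k (v k) - b k (vb k)) ≤ -(b k (g k) - b k (gb k)) := by
        linarith
      calc (ξ k - ξb k) + -(b k (v k) - b k (vb k)) ≤ -(b k (g k) - b k (gb k)) := this
        _ ≤ |b k (g k) - b k (gb k)| := neg_le_abs _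
  have hsum : ∑ k, ((ξ k - ξb k) + |b k (v k) - b k (vb k)|) ≤
      ∑ k, |b k (g k) - b k (gb k)| := Finset.sum_le_sum fun k _ => key k
  rw [Finset.sum_add_distrib, Finset.sum_sub_distrib] at hsum
  rw [abs_of_nonneg (by linarith : (0:ℝ) ≤ a u - a ub)]
  have hf : f - fb ≤ |f - fb| := le_abs_self _
  linarith

/-- K-component L¹ accretivity estimate for the coupled stationary system. -/
theorem K_component_accretivity
    (K : ℕ) (a : ℝ → ℝ) (hac : Continuous a) (ham : StrictMono a)
    (b γl γr : Fin K → ℝ → ℝ)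
    (hbc : ∀ k, Continuous (b k)) (hbm : ∀ k, Monotone (b k))
    (L : Fin K → NNReal) (hbL : ∀ k, LipschitzWith (L k) (b k))
    (hγlc : ∀ k, Continuous (γl k)) (hγrc : ∀ k, Continuous (γr k))
    (hγlm : ∀ k, Monotone (γl k)) (hγrm : ∀ k, Monotone (γr k))
    (hrl : ∀ k x, γr k x ≤ γl k x)
    (u f ub fb : ℝ) (v ξ g vb ξb gb : Fin K → ℝ)
    (e1 : a u - ∑ k, ξ k = f)
    (e2 : ∀ k, b k (v k) + ξ k = b k (g k))
    (hc : ∀ k, cMem (γr k u) (γl k u) (v k) (ξ k))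
    (e1b : a ub - ∑ k, ξb k = fb)
    (e2b : ∀ k, b k (vb k) + ξb k = b k (gb k))
    (hcb : ∀ k, cMem (γr k ub) (γl k ub) (vb k) (ξb k)) :
    |a u - a ub| + ∑ k, |b k (v k) - b k (vb k)| ≤
      |f - fb| + ∑ k, |b k (g k) - b k (gb k)| := by
  rcases le_total ub u with h | h
  · exact K_component_accretivity_aux K a ham b γl γr hbm hγlm hγrm hrl
      u f ub fb v ξ g vb ξb gb h e1 e2 hc e1b e2b hcb
  · have H := K_component_accretivity_aux K a ham b γl γr hbm hγlm hγrm hrl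
      ub fb u f vb ξb gb v ξ g h e1b e2b hcb e1 e2 hc
    have h1 : |a u - a ub| = |a ub - a u| := abs_sub_comm _ _
    have h2 : |f - fb| = |fb - f| := abs_sub_comm _ _
    have h3 : ∑ k, |b k (v k) - b k (vb k)| = ∑ k, |b k (vb k) - b k (v k)| :=
      Finset.sum_congr rfl fun k _ => abs_sub_comm _ _
    have h4 : ∑ k, |b k (g k) - b k (gb k)| = ∑ k, |b k (gb k) - b k (g k)| :=
      Finset.sum_congr rfl fun k _ => abs_sub_comm _ _
    rw [h1, h2, h3, h4]; exact H
end
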